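/- Assume moreover 1 ≤ r ≤ n−1. Then the matrix 𝔅 is degenerate (det 𝔅 = 0) if and only if either γ = 0 or γ² = r + 1. -/

import Mathlib

/-- The Cartan matrix of `sl(n+1, ℂ)` in 1-based indices:
`2` on the diagonal, `-1` for `|i - j| = 1`, and `0` otherwise. -/
noncomputable def cartanEntry (i j : ℕ) : ℂ :=
  if i = j then 2 else if i + 1 = j ∨ j + 1 = i then -1 else 0

/-- The entries of the matrix `𝔅` (1-based indices):
`𝔅_{ij} = (A_n)_{ij} (γ² − δ_{i>r} δ_{j>r} (r+1) + (r/2) δ_{i,r+1} δ_{j,r+1})`. -/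
noncomputable def Bentry (r : ℕ) (γ : ℂ) (i j : ℕ) : ℂ :=
  cartanEntry i j *
    (γ ^ 2 - (if r < i then 1 else 0) * (if r < j then 1 else 0) * ((r : ℂ) + 1)
      + ((r : ℂ) / 2) * (if i = r + 1 then 1 else 0) * (if j = r + 1 then 1 else 0))

/-- The matrix `𝔅` as an `n × n` complex matrix. -/
noncomputable def Bmatrix (n r : ℕ) (γ : ℂ) : Matrix (Fin n) (Fin n) ℂ :=
  Matrix.of fun i j => Bentry r γ (i.1 + 1) (j.1 + 1)

/-!
Let `A_n = L U` be the LU factorization of the Cartan matrix: `L` is unit lower bidiagonal with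
subdiagonal entries `-j/(j+1)`, `U` is upper bidiagonal with diagonal entries `(j+1)/j` and
superdiagonal entries `-1`. Rescaling the rows of `U` by `q_k = γ²` for `k ≤ r` and
`q_k = γ² - (r+1)` for `k > r` gives exactly `𝔅 = L · diag(q) · U`, so
`det 𝔅 = (n+1) γ^{2r} (γ² - (r+1))^{n-r}`, which vanishes iff `γ = 0` or `γ² = r + 1`
as soon as `1 ≤ r < n`.
-/

open Matrix Finset

/-- For `j = 0` the summand `f (i + 1) j * g j (j + 1)` stands for the missing column `0`. -/
theorem Matrix.of_mul_of_upperBidiagonal_apply {R : Type*} [NonUnitalNonAssocSemiring R] {n : ℕ}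
    (f g : ℕ → ℕ → R) (hg : ∀ k j, k ≠ j → k + 1 ≠ j → g k j = 0) (i j : Fin n)
    (hf : f (i + 1) 0 = 0) :
    (of (fun i j : Fin n ↦ f (i + 1) (j + 1)) * of fun i j : Fin n ↦ g (i + 1) (j + 1)) i j =
      f (i + 1) (j + 1) * g (j + 1) (j + 1) + f (i + 1) j * g j (j + 1) := by
  obtain ⟨j, hj⟩ := j
  have hterm : ∀ k : ℕ, f (i + 1) (k + 1) * g (k + 1) (j + 1) =
      (if k = j then f (i + 1) (j + 1) * g (j + 1) (j + 1) else 0) +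
        if k + 1 = j then f (i + 1) j * g j (j + 1) else 0 := by
    intro k
    by_cases h₁ : k = j
    · subst h₁; simp
    by_cases h₂ : k + 1 = j
    · subst h₂; simp
    · simp [h₁, h₂, hg (k + 1) (j + 1) (by omega) (by omega)]
  simp only [mul_apply, of_apply]
  rw [Fin.sum_univ_eq_sum_range (fun k ↦ f (i + 1) (k + 1) * g (k + 1) (j + 1)),
    sum_congr rfl fun k _ ↦ hterm k, sum_add_distrib, sum_ite_eq', if_pos (mem_range.2 hj)]
  cases j with
  | zero => simp [hf]
  | succ m => simp [sum_ite_eq', show m < n by omega]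

noncomputable def cartanLowerEntry (i j : ℕ) : ℂ :=
  if i = j then 1 else if j + 1 = i then -((j : ℂ) / (j + 1)) else 0

noncomputable def cartanUpperEntry (i j : ℕ) : ℂ :=
  if i = j then ((i : ℂ) + 1) / i else if i + 1 = j then -1 else 0

noncomputable def pivotScale (r : ℕ) (γ : ℂ) (k : ℕ) : ℂ :=
  if k ≤ r then γ ^ 2 else γ ^ 2 - (r + 1)

noncomputable def cartanLower (n : ℕ) : Matrix (Fin n) (Fin n) ℂ :=
  of fun i j ↦ cartanLowerEntry (i + 1) (j + 1)

noncomputable def cartanUpper (n : ℕ) : Matrix (Fin n) (Fin n) ℂ :=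
  of fun i j ↦ cartanUpperEntry (i + 1) (j + 1)

theorem Bentry_eq_sum_cartanLower_pivotScale_cartanUpper (r : ℕ) (γ : ℂ) (i j : ℕ) :
    Bentry r γ i (j + 1) =
      cartanLowerEntry i (j + 1) * pivotScale r γ (j + 1) * cartanUpperEntry (j + 1) (j + 1)
        + cartanLowerEntry i j * pivotScale r γ j * cartanUpperEntry j (j + 1) := by
  have hj : (j : ℂ) + 1 ≠ 0 := by exact_mod_cast j.succ_ne_zero
  have hj2 : (j : ℂ) + 1 + 1 ≠ 0 := by exact_mod_cast (j + 1).succ_ne_zero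
  simp only [cartanLowerEntry, cartanUpperEntry, pivotScale, Bentry, cartanEntry]
  obtain rfl | rfl | rfl | ⟨h₁, h₂, h₃⟩ :
      i = j + 1 ∨ i = j + 2 ∨ i = j ∨ (i ≠ j + 1 ∧ i ≠ j + 2 ∧ i ≠ j) := by omega
  all_goals
    simp only [*, ↓reduceIte, Nat.add_left_cancel_iff, Nat.add_right_cancel_iff, Nat.left_eq_add,
      Nat.add_eq_left, OfNat.ofNat_ne_one, OfNat.ofNat_ne_zero, OfNat.one_ne_ofNat, one_ne_zero,
      true_or, or_true, false_or, Nat.cast_add, Nat.cast_one]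
    split_ifs <;> first | omega | (subst_vars; field_simp; ring)

theorem Bmatrix_eq_cartanLower_mul_diagonal_mul_cartanUpper (n r : ℕ) (γ : ℂ) :
    Bmatrix n r γ =
      cartanLower n * diagonal (fun k : Fin n ↦ pivotScale r γ (k + 1)) * cartanUpper n := by
  have hlower : cartanLower n * diagonal (fun k : Fin n ↦ pivotScale r γ (k + 1)) =
      of fun i k : Fin n ↦ cartanLowerEntry (i + 1) (k + 1) * pivotScale r γ (k + 1) := by
    ext; simp [cartanLower]
  ext i j
  rw [hlower, cartanUpper,
    of_mul_of_upperBidiagonal_apply (fun i k ↦ cartanLowerEntry i k * pivotScale r γ k)]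
  · rw [Bmatrix, of_apply, Bentry_eq_sum_cartanLower_pivotScale_cartanUpper]
  · intro k j h₁ h₂
    simp [cartanUpperEntry, h₁, h₂]
  · simp [cartanLowerEntry]

theorem det_cartanLower (n : ℕ) : (cartanLower n).det = 1 := by
  rw [det_of_isLowerTriangular]
  · simp [cartanLower, cartanLowerEntry]
  · intro i j hij
    simp only [cartanLower, of_apply, cartanLowerEntry, OrderDual.toDual_lt_toDual] at hij ⊢
    rw [if_neg (by omega), if_neg (by omega)]

theorem prod_range_natCast_succ_succ_div_succ (n : ℕ) :
    ∏ k ∈ range n, (((k : ℂ) + 1 + 1) / (k + 1)) = n + 1 := by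
  induction n with
  | zero => simp
  | succ n ih =>
    have : (n : ℂ) + 1 ≠ 0 := by exact_mod_cast n.succ_ne_zero
    rw [prod_range_succ, ih]
    push_cast
    field_simp

theorem det_cartanUpper (n : ℕ) : (cartanUpper n).det = n + 1 := by
  rw [det_of_isUpperTriangular]
  · simpa [cartanUpper, cartanUpperEntry] using
      (Fin.prod_univ_eq_prod_range (fun k ↦ ((k : ℂ) + 1 + 1) / (k + 1)) n).trans
        (prod_range_natCast_succ_succ_div_succ n)
  · intro i j (hij : j.1 < i.1)
    simp only [cartanUpper, of_apply, cartanUpperEntry]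
    rw [if_neg (by omega), if_neg (by omega)]

theorem prod_pivotScale {n r : ℕ} (hrn : r ≤ n) (γ : ℂ) :
    ∏ k : Fin n, pivotScale r γ (k + 1) = (γ ^ 2) ^ r * (γ ^ 2 - (r + 1)) ^ (n - r) := by
  obtain ⟨m, rfl⟩ := Nat.exists_eq_add_of_le hrn
  rw [Fin.prod_univ_eq_prod_range (fun k ↦ pivotScale r γ (k + 1)), prod_range_add,
    Nat.add_sub_cancel_left]
  simp only [pivotScale]
  congr 1
  · rw [prod_congr rfl fun k hk ↦ if_pos (by rw [mem_range] at hk; omega), prod_const, card_range]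
  · rw [prod_congr rfl fun k _ ↦ if_neg (by omega), prod_const, card_range]

theorem det_Bmatrix {n r : ℕ} (hrn : r ≤ n) (γ : ℂ) :
    (Bmatrix n r γ).det = (n + 1) * (γ ^ 2) ^ r * (γ ^ 2 - (r + 1)) ^ (n - r) := by
  rw [Bmatrix_eq_cartanLower_mul_diagonal_mul_cartanUpper, det_mul, det_mul, det_cartanLower,
    det_diagonal, det_cartanUpper, prod_pivotScale hrn]
  ring

/-- for `1 ≤ r ≤ n − 1`, the matrix `𝔅` is degenerate (`det 𝔅 = 0`)
if and only if `γ = 0` or `γ² = r + 1`. -/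
theorem Bmatrix_degenerate_iff (n r : ℕ) (γ : ℂ) (hr1 : 1 ≤ r) (hrn : r + 1 ≤ n) :
    (Bmatrix n r γ).det = 0 ↔ γ = 0 ∨ γ ^ 2 = (r : ℂ) + 1 := by
  have hn : (n : ℂ) + 1 ≠ 0 := by exact_mod_cast n.succ_ne_zero
  rw [det_Bmatrix (by omega)]
  simp [hn, pow_eq_zero_iff, sub_eq_zero, show r ≠ 0 by omega, show n - r ≠ 0 by omega]
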